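/- Let I be a finite index set and for each i ∈ I let Lᵢ be a prefix-closed language over a finite alphabet Σᵢ with observable subset Σᵢ,ₒ ⊆ Σᵢ, faulty sublanguage Lᵢ,f ⊆ Lᵢ and non-faulty sublanguage Lᵢ,nf := Lᵢ ∖ Lᵢ,f; let L := ∥_{i∈I} Lᵢ be the global language and, for a string s over Σᵢ, let Pᵢ⁻¹(s) := { w ∈ L : Pᵢ(w) = s } (extended to sets of strings elementwise). Let Mᵢ denote the natural projection onto Σᵢ,ₒ (applied both to strings over Σᵢ and to global strings over ⋃_{i∈I} Σᵢ). If the system is locally diagnosable — i.e., there exists n ∈ ℕ such that for every i ∈ I, every s ∈ Lᵢ,f and every t with s·t ∈ Lᵢ,f and |t| ≥ n one has Mᵢ(s·t) ∉ Mᵢ(Lᵢ,nf) — then the system is modularly diagnosable: there exists n ∈ ℕ such that for every i ∈ I, every s ∈ Lᵢ,f and every t with s·t ∈ Lᵢ,f and |t| ≥ n, the sets Mᵢ(Pᵢ⁻¹(s·t)) and Mᵢ(Pᵢ⁻¹(Lᵢ,nf)) are disjoint. -/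

import Mathlib

/-! Every observation of a global string factors through its local projection, since `Oᵢ ⊆ Eᵢ`.
Hence `Mᵢ(Pᵢ⁻¹(s·t)) ⊆ {Mᵢ(s·t)}` and `Mᵢ(Pᵢ⁻¹(Lᵢ,nf)) ⊆ Mᵢ(Lᵢ,nf)`, and local diagnosability says
exactly that these two right-hand sides are disjoint. -/

/-- Natural projection: erase all events not in `S`. -/
def proj {α : Type*} [DecidableEq α] (S : Finset α) (s : List α) : List α :=
  s.filter (· ∈ S)

/-- A language is prefix-closed. -/
def PrefixClosed {α : Type*} (L : Set (List α)) : Prop :=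
  ∀ s ∈ L, ∀ t, t <+: s → t ∈ L

/-- A language over the alphabet `S`. -/
def LangOver {α : Type*} (S : Finset α) (L : Set (List α)) : Prop :=
  ∀ s ∈ L, ∀ x ∈ s, x ∈ S

/-- Parallel composition of a finite family of languages `Lloc i ⊆ (E i)*`:
the strings over `⋃ i, E i` whose projection onto each `E i` lies in
`Lloc i`. -/
def parFam {α ι : Type*} [DecidableEq α] (E : ι → Finset α)
    (Lloc : ι → Set (List α)) : Set (List α) :=
  {s | (∀ x ∈ s, ∃ i, x ∈ E i) ∧ ∀ i, proj (E i) s ∈ Lloc i}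

lemma proj_proj_of_subset {α : Type*} [DecidableEq α] {O E : Finset α} (h : O ⊆ E)
    (w : List α) : proj O (proj E w) = proj O w := by
  simp only [proj, List.filter_filter]
  refine List.filter_congr fun x _ => ?_
  by_cases hx : x ∈ O <;> simp [hx, h _]

lemma image_proj_preimage_proj_subset {α : Type*} [DecidableEq α] {O E : Finset α}
    (h : O ⊆ E) (L K : Set (List α)) :
    proj O '' {w ∈ L | proj E w ∈ K} ⊆ proj O '' K := by
  rintro _ ⟨w, ⟨-, hwK⟩, rfl⟩
  exact ⟨proj E w, hwK, proj_proj_of_subset h w⟩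

theorem stmt3_general {α ι : Type*} [DecidableEq α]
    (E O : ι → Finset α) (hO : ∀ i, O i ⊆ E i)
    (Lloc : ι → Set (List α))
    (Lf : ι → Set (List α))
    (hloc : ∃ n : ℕ, ∀ i, ∀ s ∈ Lf i, ∀ t : List α,
      s ++ t ∈ Lf i → n ≤ t.length →
        proj (O i) (s ++ t) ∉ proj (O i) '' (Lloc i \ Lf i)) :
    ∃ n : ℕ, ∀ i, ∀ s ∈ Lf i, ∀ t : List α,
      s ++ t ∈ Lf i → n ≤ t.length →
        Disjoint
          (proj (O i) '' {w ∈ parFam E Lloc | proj (E i) w = s ++ t})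
          (proj (O i) '' {w ∈ parFam E Lloc | proj (E i) w ∈ Lloc i \ Lf i}) := by
  obtain ⟨n, hn⟩ := hloc
  refine ⟨n, fun i s hs t hst hlen => ?_⟩
  refine Set.disjoint_of_subset
    (image_proj_preimage_proj_subset (hO i) _ {s ++ t})
    (image_proj_preimage_proj_subset (hO i) _ _) ?_
  rw [Set.image_singleton, Set.disjoint_singleton_left]
  exact hn i s hs t hst hlen

/-- Local diagnosability implies modular diagnosability (Contant et al.,
Theorem 2, Part 2): if there is `n` such that for every module `i`, every
faulty `s ∈ Lᵢ,f` and every continuation `t` with `s·t ∈ Lᵢ,f`, `|t| ≥ n`,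
the local observation `Mᵢ(s·t)` is not an observation of `Lᵢ,nf`, then there
is `n` such that the sets `Mᵢ(Pᵢ⁻¹(s·t))` and `Mᵢ(Pᵢ⁻¹(Lᵢ,nf))` are
disjoint. -/
theorem stmt3 {α ι : Type*} [DecidableEq α] [Fintype ι]
    (E O : ι → Finset α) (hO : ∀ i, O i ⊆ E i)
    (Lloc : ι → Set (List α))
    (hLloc : ∀ i, LangOver (E i) (Lloc i))
    (hpc : ∀ i, PrefixClosed (Lloc i))
    (Lf : ι → Set (List α)) (hLf : ∀ i, Lf i ⊆ Lloc i)
    (hloc : ∃ n : ℕ, ∀ i, ∀ s ∈ Lf i, ∀ t : List α,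
      s ++ t ∈ Lf i → n ≤ t.length →
        proj (O i) (s ++ t) ∉ proj (O i) '' (Lloc i \ Lf i)) :
    ∃ n : ℕ, ∀ i, ∀ s ∈ Lf i, ∀ t : List α,
      s ++ t ∈ Lf i → n ≤ t.length →
        Disjoint
          (proj (O i) '' {w ∈ parFam E Lloc | proj (E i) w = s ++ t})
          (proj (O i) '' {w ∈ parFam E Lloc | proj (E i) w ∈ Lloc i \ Lf i}) :=
  stmt3_general E O hO Lloc Lf hloc
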